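/- arXiv:1606.08721 — 3 statements merged into one kernel-verified Lean document; each statement's English description precedes it below -/
import Mathlib

section
/- (Lemma 3.1) Suppose R0 > 1. Then for every delay d_I ≥ 0 the characteristic function Δ of the linearization at the disease-free equilibrium has a positive real root: there exists λ > 0 with Δ(λ) = 0. (Hence the disease-free equilibrium is unstable for any d_I ≥ 0.) -/
private lemma tb_aux_pows (M : ℝ) (h : 1 ≤ M) :
    1 ≤ M ^ 3 ∧ M ^ 2 ≤ M ^ 3 ∧ M ≤ M ^ 3 := by
  refine ⟨?_, ?_, ?_⟩ <;> nlinarith [sq_nonneg M, sq_nonneg (M - 1)]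

set_option maxHeartbeats 1000000 in
/-- (Lemma 3.1) If `R0 > 1`, then for every delay `dI ≥ 0` the characteristic
function `Δ` of the linearization at the disease-free equilibrium has a
positive real root; hence the disease-free equilibrium is unstable for any
`dI ≥ 0`. -/
theorem tb_dfe_unstable_of_R0_gt_one
    (μ β δ ω ωR τ0 τ1 τ2 φ : ℝ)
    (hμ : 0 < μ) (hβ : 0 < β) (hδ : 0 < δ) (hω : 0 < ω) (hωR : 0 < ωR)
    (hτ0 : 0 < τ0) (hτ1 : 0 < τ1) (hτ2 : 0 < τ2)
    (hφ0 : 0 < φ) (hφ1 : φ < 1)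
    (NN DD R0 c1 c2 c3 c4 c5 c6 a0 a1 a2 a3 : ℝ)
    (hNN : NN = β * (ωR * (ω + τ2 + μ) * τ1
      + δ * ((ωR + μ) * (φ * μ + ω) + (ωR + φ * μ) * τ2)))
    (hDD : DD = μ * (τ0 + μ + ωR) * (ω + τ2 + μ) * (δ + τ1 + μ))
    (hR0 : R0 = NN / DD)
    (hc1 : c1 = δ + τ1 + μ) (hc2 : c2 = ω + τ2 + μ) (hc3 : c3 = ωR + τ0 + μ)
    (hc4 : c4 = τ0 + ωR) (hc5 : c5 = τ2 + ω) (hc6 : c6 = δ + τ1)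
    (ha0 : a0 = DD - NN)
    (ha1 : a1 = (2 / μ) * DD + μ ^ 2 * (c1 + c2 + c4) - c4 * c5 * c6
      - β * (τ1 * ωR + ω * δ + δ * φ * (ωR + τ2 + 2 * μ)))
    (ha2 : a2 = c4 * c5 + 3 * μ * (c1 + c2 + c4) + c6 * (c4 + c5) - β * φ * δ)
    (ha3 : a3 = c1 + c2 + c3 + μ)
    (hR0gt : R0 > 1) :
    ∀ dI : ℝ, 0 ≤ dI → ∃ lam : ℝ, 0 < lam ∧
      lam ^ 4 + a3 * lam ^ 3 + a2 * lam ^ 2 + a1 * lam + a0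
        + τ0 * (lam + μ) * (lam + c1) * (lam + c2)
          * (Real.exp (-(lam * dI)) - 1) = 0 := by
  intro dI hdI
  -- basic positivity
  have hDDpos : 0 < DD := by rw [hDD]; positivity
  have hNNgt : DD < NN := by
    have h := (one_lt_div hDDpos).mp (hR0 ▸ hR0gt)
    linarith
  have ha0neg : a0 < 0 := by rw [ha0]; linarith
  have hc1pos : 0 < c1 := by rw [hc1]; positivity
  have hc2pos : 0 < c2 := by rw [hc2]; positivity
  clear hNN hDD hR0 ha0 ha1 ha2 ha3 hc1 hc2 hc3 hc4 hc5 hc6 hR0gt hNNgt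
    hDDpos hβ hδ hω hωR hτ1 hτ2 hφ0 hφ1
  -- the characteristic function
  obtain ⟨f, hf⟩ : ∃ f : ℝ → ℝ, f = fun x =>
      x ^ 4 + a3 * x ^ 3 + a2 * x ^ 2 + a1 * x + a0
      + τ0 * (x + μ) * (x + c1) * (x + c2) * (Real.exp (-(x * dI)) - 1) :=
    ⟨_, rfl⟩
  have hcont : Continuous f := by rw [hf]; fun_prop
  have hf0 : f 0 = a0 := by
    simp [hf, Real.exp_zero]
  -- the large point M
  obtain ⟨K, hK⟩ : ∃ K : ℝ,
      K = |a3| + |a2| + |a1| + |a0| + τ0 * (1 + μ) * (1 + c1) * (1 + c2) :=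
    ⟨_, rfl⟩
  have hKnn : 0 ≤ K := by
    have h0 : 0 < τ0 * (1 + μ) * (1 + c1) * (1 + c2) := by positivity
    have h1 := abs_nonneg a3
    have h2 := abs_nonneg a2
    have h3 := abs_nonneg a1
    have h4 := abs_nonneg a0
    linarith
  obtain ⟨M, hM⟩ : ∃ M : ℝ, M = K + 1 := ⟨_, rfl⟩
  have hM1 : (1 : ℝ) ≤ M := by rw [hM]; linarith
  have hMpos : (0 : ℝ) < M := by linarith
  obtain ⟨hM3, hM23, hM13⟩ := tb_aux_pows M hM1
  -- bound the cubic factor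
  have hT : 0 < τ0 * (M + μ) * (M + c1) * (M + c2) := by positivity
  have hTle : τ0 * (M + μ) * (M + c1) * (M + c2)
      ≤ τ0 * (1 + μ) * (1 + c1) * (1 + c2) * M ^ 3 := by
    have h1 : M + μ ≤ (1 + μ) * M := by nlinarith
    have h2 : M + c1 ≤ (1 + c1) * M := by nlinarith
    have h3 : M + c2 ≤ (1 + c2) * M := by nlinarith
    have hm1 : 0 < M + μ := by linarith
    have hm2 : 0 < M + c1 := by linarith
    have hm3 : 0 < M + c2 := by linarith
    calc τ0 * (M + μ) * (M + c1) * (M + c2)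
        ≤ τ0 * ((1 + μ) * M) * ((1 + c1) * M) * ((1 + c2) * M) := by
          apply mul_le_mul
          apply mul_le_mul
          apply mul_le_mul le_rfl h1 (le_of_lt hm1) (le_of_lt hτ0)
          exact h2
          exact le_of_lt hm2
          positivity
          exact h3
          exact le_of_lt hm3
          positivity
      _ = τ0 * (1 + μ) * (1 + c1) * (1 + c2) * M ^ 3 := by ring
  -- f M > 0
  have hfMpos : 0 < f M := by
    have hE : Real.exp (-(M * dI)) - 1 > -1 := by
      have := Real.exp_pos (-(M * dI))
      linarith
    have hQ : τ0 * (M + μ) * (M + c1) * (M + c2) * (Real.exp (-(M * dI)) - 1)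
        > -(τ0 * (M + μ) * (M + c1) * (M + c2)) := by
      nlinarith
    have hb3 : a3 * M ^ 3 ≥ -(|a3| * M ^ 3) := by
      have h := neg_abs_le a3
      have h3 : (0:ℝ) ≤ M ^ 3 := by linarith
      nlinarith
    have hb2 : a2 * M ^ 2 ≥ -(|a2| * M ^ 3) := by
      have h := neg_abs_le a2
      have h2 := abs_nonneg a2
      have h2' : (0:ℝ) ≤ M ^ 2 := sq_nonneg M
      nlinarith
    have hb1 : a1 * M ≥ -(|a1| * M ^ 3) := by
      have h := neg_abs_le a1
      have h2 := abs_nonneg a1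
      nlinarith
    have hb0 : a0 ≥ -(|a0| * M ^ 3) := by
      have h := neg_abs_le a0
      have h2 := abs_nonneg a0
      nlinarith
    have hKM : K * M ^ 3 = |a3| * M ^ 3 + |a2| * M ^ 3 + |a1| * M ^ 3
        + |a0| * M ^ 3 + τ0 * (1 + μ) * (1 + c1) * (1 + c2) * M ^ 3 := by
      rw [hK]; ring
    have hMK : M ^ 4 - K * M ^ 3 = M ^ 3 := by rw [hM]; ring
    have hfM : f M = M ^ 4 + a3 * M ^ 3 + a2 * M ^ 2 + a1 * M + a0
        + τ0 * (M + μ) * (M + c1) * (M + c2)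
          * (Real.exp (-(M * dI)) - 1) := by rw [hf]
    have hgt : f M > M ^ 4 - K * M ^ 3 := by
      rw [hfM]
      linarith [hQ, hb3, hb2, hb1, hb0, hTle, hKM]
    rw [hMK] at hgt
    linarith
  -- intermediate value theorem
  have hsub := intermediate_value_Ioo (le_of_lt hMpos) hcont.continuousOn
  have h0mem : (0 : ℝ) ∈ Set.Ioo (f 0) (f M) := by
    rw [hf0]; exact ⟨ha0neg, hfMpos⟩
  obtain ⟨lam, hlam, hflam⟩ := hsub h0mem
  rw [hf] at hflam
  exact ⟨lam, hlam.1, hflam⟩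
end

section
/- (Routh–Hurwitz criterion for quartics) Let a0, a1, a2, a3 be positive real numbers satisfying a3·a2 > a1 and a3·a2·a1 > a1² + a3²·a0. Then every complex root z of the polynomial z⁴ + a3·z³ + a2·z² + a1·z + a0 has negative real part, Re z < 0. -/
/-- (Routh–Hurwitz criterion for quartics) Let `a0, a1, a2, a3` be positive
real numbers satisfying `a3*a2 > a1` and `a3*a2*a1 > a1² + a3²*a0`. Then every
complex root `z` of `z⁴ + a3*z³ + a2*z² + a1*z + a0` has `Re z < 0`. -/
theorem routh_hurwitz_quartic
    (a0 a1 a2 a3 : ℝ)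
    (h0 : 0 < a0) (h1 : 0 < a1) (h2 : 0 < a2) (h3 : 0 < a3)
    (h32 : a3 * a2 > a1)
    (h321 : a3 * a2 * a1 > a1 ^ 2 + a3 ^ 2 * a0) :
    ∀ z : ℂ,
      z ^ 4 + (a3 : ℂ) * z ^ 3 + (a2 : ℂ) * z ^ 2 + (a1 : ℂ) * z + (a0 : ℂ) = 0 →
      z.re < 0 := by
  intro z h
  by_contra hcon
  push_neg at hcon
  set x := z.re with hxdef
  set y := z.im with hydef
  have hx : (0:ℝ) ≤ x := hcon
  have hzeq : z = (x:ℂ) + (y:ℂ)*Complex.I := (Complex.re_add_im z).symm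
  have key : ((x^4 - 6*x^2*y^2 + y^4 + a3*(x^3-3*x*y^2) + a2*(x^2-y^2) + a1*x + a0 : ℝ) : ℂ)
      + ((4*x^3*y - 4*x*y^3 + a3*(3*x^2*y - y^3) + a2*(2*x*y) + a1*y : ℝ) : ℂ) * Complex.I = 0 := by
    rw [← h, hzeq]; push_cast
    linear_combination (-3*(x:ℂ)*y^2*a3 - 4*(x:ℂ)*(y:ℂ)^3*Complex.I - 6*(x:ℂ)^2*(y:ℂ)^2
      - (y:ℂ)^2*a2 - (y:ℂ)^3*a3*Complex.I - (y:ℂ)^4*(Complex.I^2-1)) * Complex.I_sq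
  have hRe : x^4 - 6*x^2*y^2 + y^4 + a3*(x^3-3*x*y^2) + a2*(x^2-y^2) + a1*x + a0 = 0 := by
    simpa only [Complex.add_re, Complex.mul_re, Complex.ofReal_re, Complex.ofReal_im,
      Complex.I_re, Complex.I_im, Complex.zero_re, mul_zero, mul_one, zero_mul, sub_zero,
      add_zero, zero_add] using congrArg Complex.re key
  have hIm : 4*x^3*y - 4*x*y^3 + a3*(3*x^2*y - y^3) + a2*(2*x*y) + a1*y = 0 := by
    simpa only [Complex.add_im, Complex.mul_im, Complex.ofReal_re, Complex.ofReal_im,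
      Complex.I_re, Complex.I_im, Complex.zero_im, mul_zero, mul_one, zero_mul, sub_zero,
      add_zero, zero_add] using congrArg Complex.im key
  -- auxiliary inequality: 4*a0 < a2^2
  have haux : 4*a0 < a2^2 := by nlinarith [sq_nonneg (a2*a3 - 2*a1), sq_nonneg a3, mul_pos h3 h3]
  by_cases hy0 : y = 0
  · -- real root x ≥ 0: impossible since all coefficients positive
    rw [hy0] at hRe
    nlinarith [pow_nonneg hx 4, pow_nonneg hx 3, pow_nonneg hx 2,
      mul_nonneg h3.le (pow_nonneg hx 3), mul_nonneg h2.le (pow_nonneg hx 2),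
      mul_nonneg h1.le hx]
  · -- nonreal root: imaginary part gives (4x+a3) y² = 4x³+3a3x²+2a2x+a1
    have hM : (4*x+a3)*y^2 = 4*x^3+3*a3*x^2+2*a2*x+a1 := by
      have hfac : y * ((4*x+a3)*y^2 - (4*x^3+3*a3*x^2+2*a2*x+a1)) = 0 := by
        linear_combination -hIm
      rcases mul_eq_zero.mp hfac with h' | h'
      · exact absurd h' hy0
      · linarith
    -- eliminate y to get the Routh-Hurwitz polynomial identity
    have hE : (a1^2 + a0*a3^2 - a1*a2*a3) + x*(8*a0*a3 - 2*a2^2*a3 - 2*a1*a3^2)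
        + x^2*(16*a0 - 4*a2^2 - 8*a2*a3^2 - 4*a1*a3) - x^3*(8*a3^3 + 32*a2*a3)
        - x^4*(48*a3^2 + 32*a2) - 96*x^5*a3 - 64*x^6 = 0 := by
      linear_combination (4*x+a3)^2 * hRe - ((4*x+a3)*y^2 + (4*x^3+3*a3*x^2+2*a2*x+a1)
        - (6*x^2+3*a3*x+a2)*(4*x+a3)) * hM
    -- but the LHS is strictly negative for x ≥ 0
    nlinarith [hE, mul_nonneg hx hx, pow_nonneg hx 2, pow_nonneg hx 3, pow_nonneg hx 4,
      pow_nonneg hx 5, pow_nonneg hx 6,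
      mul_nonneg hx (mul_pos h3 (show (0:ℝ) < a2^2 - 4*a0 by linarith)).le,
      mul_nonneg hx (mul_pos h1 (mul_pos h3 h3)).le,
      mul_nonneg (pow_nonneg hx 2) (show (0:ℝ) ≤ a2^2 - 4*a0 by linarith),
      mul_nonneg (pow_nonneg hx 2) (mul_pos h2 (mul_pos h3 h3)).le,
      mul_nonneg (pow_nonneg hx 2) (mul_pos h1 h3).le,
      mul_nonneg (pow_nonneg hx 3) (mul_pos h3 (mul_pos h3 h3)).le,
      mul_nonneg (pow_nonneg hx 3) (mul_pos h2 h3).le,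
      mul_nonneg (pow_nonneg hx 4) (mul_pos h3 h3).le,
      mul_nonneg (pow_nonneg hx 4) h2.le,
      mul_nonneg (pow_nonneg hx 5) h3.le]
end

section
/- (Lemma 3.3, for the computed parameter values) With the Table parameter values and β = 40 (for which R0 < 1), there exist a delay d_I > 0 and a real b > 0 such that the characteristic function with delay d_I satisfies Δ(i·b) = 0, i.e. the characteristic equation has a purely imaginary root; hence the disease-free equilibrium is not asymptotically stable for this positive delay. -/
noncomputable section TBNumeric

/-- Table parameter values. -/
def μ : ℝ := 1 / 70
def β : ℝ := 40
def δ : ℝ := 12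
def φ : ℝ := 0.05
def ω : ℝ := 0.0002
def ωR : ℝ := 0.00002
def τ0 : ℝ := 2
def τ1 : ℝ := 2
def τ2 : ℝ := 1

def c1 : ℝ := δ + τ1 + μ
def c2 : ℝ := ω + τ2 + μ
def c3 : ℝ := ωR + τ0 + μ
def c4 : ℝ := τ0 + ωR
def c5 : ℝ := τ2 + ω
def c6 : ℝ := δ + τ1

def NN : ℝ := β * (ωR * (ω + τ2 + μ) * τ1
  + δ * ((ωR + μ) * (φ * μ + ω) + (ωR + φ * μ) * τ2))
def DD : ℝ := μ * (τ0 + μ + ωR) * (ω + τ2 + μ) * (δ + τ1 + μ)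

def a0 : ℝ := DD - NN
def a1 : ℝ := (2 / μ) * DD + μ ^ 2 * (c1 + c2 + c4) - c4 * c5 * c6
  - β * (τ1 * ωR + ω * δ + δ * φ * (ωR + τ2 + 2 * μ))
def a2 : ℝ := c4 * c5 + 3 * μ * (c1 + c2 + c4) + c6 * (c4 + c5) - β * φ * δ
def a3 : ℝ := c1 + c2 + c3 + μ

/-- The characteristic function `Δ` with delay `dI`, as a function of a
complex variable. -/
def Δ (dI : ℝ) (lam : ℂ) : ℂ :=
  lam ^ 4 + (a3 : ℂ) * lam ^ 3 + (a2 : ℂ) * lam ^ 2 + (a1 : ℂ) * lam + (a0 : ℂ)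
    + (τ0 : ℂ) * (lam + (μ : ℂ)) * (lam + (c1 : ℂ)) * (lam + (c2 : ℂ))
      * (Complex.exp (-(lam * (dI : ℂ))) - 1)


/-- `P(i b)` as a function of the real number `b`. -/
def Pc (b : ℝ) : ℂ :=
  (Complex.I * b) ^ 4 + (a3 : ℂ) * (Complex.I * b) ^ 3
    + (a2 : ℂ) * (Complex.I * b) ^ 2 + (a1 : ℂ) * (Complex.I * b) + (a0 : ℂ)

/-- `R(i b) = τ0 (i b + μ)(i b + c1)(i b + c2)`. -/
def Rc (b : ℝ) : ℂ :=
  (τ0 : ℂ) * ((Complex.I * b) + (μ : ℂ)) * ((Complex.I * b) + (c1 : ℂ))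
    * ((Complex.I * b) + (c2 : ℂ))

/-- The auxiliary real function whose zero gives a purely imaginary root. -/
def f (b : ℝ) : ℝ := Complex.normSq (Rc b - Pc b) - Complex.normSq (Rc b)

lemma f_cont : Continuous f := by
  have hR : Continuous Rc := by unfold Rc; fun_prop
  have hP : Continuous Pc := by unfold Pc; fun_prop
  unfold f
  exact (Complex.continuous_normSq.comp (hR.sub hP)).sub
    (Complex.continuous_normSq.comp hR)

lemma f_zero_neg : f 0 < 0 := by
  norm_num [f, Rc, Pc, Complex.normSq_apply, Complex.add_re, Complex.add_im,
    Complex.mul_re, Complex.mul_im, Complex.sub_re, Complex.sub_im,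
    Complex.I_re, Complex.I_im, Complex.ofReal_re, Complex.ofReal_im,
    a0, a1, a2, a3, NN, DD, c1, c2, c3, c4, c5, c6, μ, β, δ, φ, ω, ωR, τ0, τ1, τ2]

lemma f_one_pos : 0 < f 1 := by
  norm_num [f, Rc, Pc, Complex.normSq_apply, Complex.add_re, Complex.add_im,
    Complex.mul_re, Complex.mul_im, Complex.sub_re, Complex.sub_im,
    Complex.I_re, Complex.I_im, Complex.ofReal_re, Complex.ofReal_im,
    pow_succ, a0, a1, a2, a3, NN, DD, c1, c2, c3, c4, c5, c6, μ, β, δ, φ, ω, ωR, τ0, τ1, τ2]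

/-- (Lemma 3.3, for the computed parameter values with `β = 40`, so `R0 < 1`)
There exist a delay `dI > 0` and a real `b > 0` such that the characteristic
equation has the purely imaginary root `i·b`; hence the disease-free
equilibrium is not asymptotically stable for this positive delay. -/
theorem tb_dfe_purely_imaginary_root_exists :
    ∃ dI : ℝ, 0 < dI ∧ ∃ b : ℝ, 0 < b ∧ Δ dI (Complex.I * b) = 0 := by
  -- find `b ∈ (0,1]` with `f b = 0` by the intermediate value theorem
  have hsub : Set.Icc (f 0) (f 1) ⊆ f '' Set.Icc (0:ℝ) 1 :=
    intermediate_value_Icc (by norm_num) f_cont.continuousOn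
  obtain ⟨b, hb, hfb⟩ := hsub ⟨f_zero_neg.le, f_one_pos.le⟩
  have hbpos : 0 < b := by
    rcases hb.1.lt_or_eq with h | h
    · exact h
    · exact absurd (h ▸ hfb) f_zero_neg.ne
  -- `R(ib) ≠ 0`
  have hre : ∀ c : ℝ, c ≠ 0 → (Complex.I * (b:ℂ) + (c:ℂ)) ≠ 0 := by
    intro c hc h
    have := congrArg Complex.re h
    simp [Complex.add_re, Complex.mul_re] at this
    exact hc this
  have hμ : μ ≠ 0 := by norm_num [μ]
  have hc1 : c1 ≠ 0 := by norm_num [c1, δ, τ1, μ]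
  have hc2 : c2 ≠ 0 := by norm_num [c2, ω, τ2, μ]
  have hτ0 : (τ0 : ℂ) ≠ 0 := by norm_num [τ0]
  have hRne : Rc b ≠ 0 := by
    unfold Rc
    exact mul_ne_zero (mul_ne_zero (mul_ne_zero hτ0 (hre μ hμ)) (hre c1 hc1)) (hre c2 hc2)
  have hRsq : Complex.normSq (Rc b) ≠ 0 := by
    simpa [Complex.normSq_eq_zero] using hRne
  -- the unit complex number
  set w : ℂ := (Rc b - Pc b) / Rc b with hw
  have hwsq : Complex.normSq w = 1 := by
    rw [hw, Complex.normSq_div]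
    have : Complex.normSq (Rc b - Pc b) = Complex.normSq (Rc b) := by
      have := hfb; unfold f at this; linarith
    rw [this, div_self hRsq]
  have habs : ‖w‖ = 1 := by
    have h2 : ‖w‖ ^ 2 = 1 := by rw [Complex.sq_norm, hwsq]
    have := norm_nonneg w
    nlinarith
  set θ : ℝ := Complex.arg w with hθ
  have hwexp : Complex.exp ((θ : ℂ) * Complex.I) = w := by
    have := Complex.norm_mul_exp_arg_mul_I w
    rwa [habs, Complex.ofReal_one, one_mul] at this
  -- the delay
  refine ⟨(2 * Real.pi - θ) / b, ?_, b, hbpos, ?_⟩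
  · apply div_pos _ hbpos
    have h1 : θ ≤ Real.pi := Complex.arg_le_pi w
    have h2 : 0 < Real.pi := Real.pi_pos
    linarith
  · have hbC : (b : ℂ) ≠ 0 := Complex.ofReal_ne_zero.mpr hbpos.ne'
    have hexp : Complex.exp (-(Complex.I * (b:ℂ) * (((2 * Real.pi - θ) / b : ℝ) : ℂ))) = w := by
      have harg : -(Complex.I * (b:ℂ) * (((2 * Real.pi - θ) / b : ℝ) : ℂ))
          = (θ : ℂ) * Complex.I - 2 * (Real.pi : ℂ) * Complex.I := by
        push_cast
        field_simp
        ring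
      rw [harg, Complex.exp_sub, Complex.exp_two_pi_mul_I, div_one, hwexp]
    have key : Rc b * w = Rc b - Pc b := by
      rw [hw, mul_div_cancel₀ _ hRne]
    have hΔ : Δ ((2 * Real.pi - θ) / b) (Complex.I * b) = Pc b + Rc b * (w - 1) := by
      unfold Δ Pc Rc
      rw [hexp]
    rw [hΔ, mul_sub, key]; ring


end TBNumeric
end
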